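/- A transport functor is exactly continuous as soon as its underlying web functor is continuous: let T be an I-ary functor in Rel that commutes with componentwise directed unions of sets and of relations, with ownership relation (own_i)_{i∈I} defining a transport functor T^own. For each i ∈ I let (𝒜_{i,j})_{j∈J_i} be a ⊑-directed family of finiteness spaces whose supremum ⊔_j 𝒜_{i,j} is exact. Then T^own((⊔_j 𝒜_{i,j})_{i∈I}) equals the ⊑-supremum over multi-indices (j_i)_{i∈I} ∈ Π_i J_i of T^own((𝒜_{i,j_i})_{i∈I}), and this supremum is exact. -/

import Mathlib

/-!
Continuity of `T` identifies the webs. Each `T^own(𝒜_j)` sits inside the transport space of the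
suprema, whose structure is closed under double duals because ownership has finite fibres; so
everything reduces to showing that a set `s` of that structure lies in a single `T^own(𝒜_j)`.
By exactness its owned parts `uᵢ = ownᵢ[s]` are finitary in some `𝒜_{i,j}`, and the crux is that
each `x ∈ s` lies in `T(D)`, with `Dᵢ = uᵢ` when the web minus `uᵢ` is infinite and `Dᵢ` the whole
web otherwise (then a single `𝒜_{i,j}` contains it). For this, shift the complement of `uᵢ`
inside itself by infinitely many injections with pairwise disjoint images: ownership and the
finitariness of a collapse onto `u` force two of the images of `x` to coincide, which puts `x`
in `T(D)`.
-/

open Set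

namespace FinitenessPaper

/-- The predual of a set `F` of subsets of `A`. -/
def predual {α : Type*} (A : Set α) (F : Set (Set α)) : Set (Set α) :=
  {a' | a' ⊆ A ∧ ∀ a ∈ F, (a ∩ a').Finite}

/-- A finiteness space: a web together with a finiteness structure on it. -/
structure FinSpace (α : Type*) where
  web : Set α
  fin : Set (Set α)
  isFin : predual web (predual web fin) = fin

/-- Finiteness inclusion order. -/
def fsLE {α : Type*} (A B : FinSpace α) : Prop := A.web ⊆ B.web ∧ A.fin ⊆ B.fin

/-- Direct image of a set under a relation. -/
def rimage {α β : Type*} (f : Set (α × β)) (a : Set α) : Set β := {y | ∃ x ∈ a, (x, y) ∈ f}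

/-- Reverse relation. -/
def rrev {α β : Type*} (f : Set (α × β)) : Set (β × α) := {p | (p.2, p.1) ∈ f}

/-- Composition of relations. -/
def rcomp {α β γ : Type*} (g : Set (β × γ)) (f : Set (α × β)) : Set (α × γ) :=
  {p | ∃ b, (p.1, b) ∈ f ∧ (b, p.2) ∈ g}

/-- Identity relation on a set. -/
def rid {α : Type*} (A : Set α) : Set (α × α) := {p | p.1 ∈ A ∧ p.1 = p.2}

/-- A relation is finitary between two (webs with) finiteness structures. -/
def FinitaryRel {α β : Type*} (Aw : Set α) (AF : Set (Set α)) (Bw : Set β)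
    (BF : Set (Set β)) (f : Set (α × β)) : Prop :=
  (∀ a ∈ AF, rimage f a ∈ BF) ∧
  ∀ b' ∈ predual Bw BF, rimage (rrev f) b' ∈ predual Aw AF

open Function

section Relations

variable {α β γ : Type*}

def graphOn (f : α → β) (A : Set α) : Set (α × β) := {p | p.1 ∈ A ∧ f p.1 = p.2}

theorem mem_graphOn {f : α → β} {A : Set α} {a : α} {b : β} :
    (a, b) ∈ graphOn f A ↔ a ∈ A ∧ f a = b := Iff.rfl

theorem mem_rcomp {g : Set (β × γ)} {f : Set (α × β)} {a : α} {c : γ} :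
    (a, c) ∈ rcomp g f ↔ ∃ b, (a, b) ∈ f ∧ (b, c) ∈ g := Iff.rfl

theorem mem_rrev {r : Set (α × β)} {a : α} {b : β} : (b, a) ∈ rrev r ↔ (a, b) ∈ r := Iff.rfl

theorem mem_rid {A : Set α} {a a' : α} : (a, a') ∈ rid A ↔ a ∈ A ∧ a = a' := Iff.rfl

theorem mem_rimage {r : Set (α × β)} {s : Set α} {y : β} :
    y ∈ rimage r s ↔ ∃ x ∈ s, (x, y) ∈ r := Iff.rfl

theorem mem_rimage_singleton {r : Set (α × β)} {x : α} {y : β} :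
    y ∈ rimage r {x} ↔ (x, y) ∈ r :=
  ⟨fun ⟨_, hx, h⟩ => mem_singleton_iff.1 hx ▸ h, fun h => ⟨x, rfl, h⟩⟩

theorem rimage_mono {r : Set (α × β)} {s t : Set α} (h : s ⊆ t) : rimage r s ⊆ rimage r t :=
  fun _ ⟨x, hx, hxy⟩ => ⟨x, h hx, hxy⟩

theorem graphOn_subset_prod {f : α → β} {A : Set α} {B : Set β} (h : MapsTo f A B) :
    graphOn f A ⊆ A ×ˢ B :=
  fun _ ⟨ha, he⟩ => ⟨ha, he ▸ h ha⟩

theorem rid_subset_prod {A B C : Set α} (hB : A ⊆ B) (hC : A ⊆ C) : rid A ⊆ B ×ˢ C := by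
  rintro ⟨a, a'⟩ h
  obtain ⟨ha, rfl⟩ := mem_rid.1 h
  exact ⟨hB ha, hC ha⟩

theorem graphOn_mono {f : α → β} {A B : Set α} (h : A ⊆ B) : graphOn f A ⊆ graphOn f B :=
  fun _ ⟨ha, he⟩ => ⟨h ha, he⟩

theorem graphOn_congr {f g : α → β} {A : Set α} (h : EqOn f g A) : graphOn f A = graphOn g A := by
  ext ⟨a, b⟩
  exact and_congr_right fun ha => by rw [h ha]

theorem rcomp_graphOn {f : α → β} {g : β → γ} {A : Set α} {B : Set β} (h : MapsTo f A B) :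
    rcomp (graphOn g B) (graphOn f A) = graphOn (g ∘ f) A := by
  ext ⟨a, c⟩
  simp only [mem_rcomp, mem_graphOn, comp_apply]
  constructor
  · rintro ⟨b, ⟨ha, rfl⟩, -, rfl⟩
    exact ⟨ha, rfl⟩
  · rintro ⟨ha, rfl⟩
    exact ⟨f a, ⟨ha, rfl⟩, h ha, rfl⟩

theorem rimage_graphOn {f : α → β} {A s : Set α} : rimage (graphOn f A) s = f '' (s ∩ A) := by
  ext y
  simp only [mem_rimage, mem_graphOn, mem_image, mem_inter_iff, and_assoc]

theorem rimage_rrev_graphOn {f : α → β} {A : Set α} {s : Set β} :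
    rimage (rrev (graphOn f A)) s = A ∩ f ⁻¹' s := by
  ext x
  simp only [mem_rimage, mem_rrev, mem_graphOn, mem_inter_iff, mem_preimage]
  constructor
  · rintro ⟨b, hb, hx, rfl⟩
    exact ⟨hx, hb⟩
  · rintro ⟨hx, hb⟩
    exact ⟨f x, hb, hx, rfl⟩

theorem rcomp_rid_rid (A B : Set α) : rcomp (rid B) (rid A) = rid (A ∩ B) := by
  ext ⟨a, b⟩
  simp only [mem_rid, mem_rcomp, mem_inter_iff]
  constructor
  · rintro ⟨c, ⟨ha, rfl⟩, hb, rfl⟩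
    exact ⟨⟨ha, hb⟩, rfl⟩
  · rintro ⟨⟨ha, hb⟩, rfl⟩
    exact ⟨a, ⟨ha, rfl⟩, hb, rfl⟩

theorem rrev_graphOn_subset_prod {f : α → β} {A : Set α} :
    rrev (graphOn f A) ⊆ (f '' A) ×ˢ A := by
  rintro ⟨b, a⟩ h
  obtain ⟨ha, rfl⟩ := mem_graphOn.1 (mem_rrev.1 h)
  exact ⟨⟨a, ha, rfl⟩, ha⟩

theorem rid_subset_rcomp_rrev_graphOn {f : α → β} {A : Set α} :
    rid A ⊆ rcomp (rrev (graphOn f A)) (graphOn f A) := by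
  rintro ⟨a, a'⟩ h
  obtain ⟨ha, rfl⟩ := mem_rid.1 h
  exact ⟨f a, ⟨ha, rfl⟩, ha, rfl⟩

theorem rid_image_subset_rcomp_graphOn_rrev {f : α → β} {A : Set α} :
    rid (f '' A) ⊆ rcomp (graphOn f A) (rrev (graphOn f A)) := by
  rintro ⟨b, b'⟩ h
  obtain ⟨⟨a, ha, rfl⟩, rfl⟩ := mem_rid.1 h
  exact ⟨a, ⟨ha, rfl⟩, ha, rfl⟩

theorem rcomp_graphOn_rrev_subset {f : α → β} {A : Set α} :
    rcomp (graphOn f A) (rrev (graphOn f A)) ⊆ rid (f '' A) := by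
  rintro ⟨b, b'⟩ h
  simp only [mem_rcomp, mem_rrev, mem_graphOn] at h
  obtain ⟨a, ⟨ha, rfl⟩, -, rfl⟩ := h
  exact ⟨⟨a, ha, rfl⟩, rfl⟩

theorem rcomp_rrev_graphOn_subset {f : α → β} {A : Set α} (h : InjOn f A) :
    rcomp (rrev (graphOn f A)) (graphOn f A) ⊆ rid A := by
  rintro ⟨a, a'⟩ h'
  simp only [mem_rcomp, mem_rrev, mem_graphOn] at h'
  obtain ⟨b, ⟨ha, rfl⟩, ha', he⟩ := h'
  exact ⟨ha, h ha ha' he.symm⟩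

end Relations

section Finiteness

variable {α β : Type*}

theorem finite_mem_predual {A : Set α} {F : Set (Set α)} {b : Set α} (hbA : b ⊆ A)
    (hb : b.Finite) : b ∈ predual A F :=
  ⟨hbA, fun _ _ => hb.subset inter_subset_right⟩

theorem subset_predual_predual {A : Set α} {F : Set (Set α)} (h : ∀ a ∈ F, a ⊆ A) :
    F ⊆ predual A (predual A F) :=
  fun a ha => ⟨h a ha, fun _ hb => inter_comm a _ ▸ hb.2 a ha⟩

theorem predual_predual_mono {A : Set α} {F G : Set (Set α)} (h : F ⊆ G) :
    predual A (predual A F) ⊆ predual A (predual A G) :=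
  fun _ ha => ⟨ha.1, fun b hb => ha.2 b ⟨hb.1, fun a' ha' => hb.2 a' (h ha')⟩⟩

theorem FinSpace.fin_subset_web (S : FinSpace α) {a : Set α} (ha : a ∈ S.fin) : a ⊆ S.web := by
  rw [← S.isFin] at ha
  exact ha.1

/-- A set `b` of the dual of `H` meets the image of `t` only in the images of finitely many
witnesses in `t`, and these form a set of the dual of `G`. -/
theorem rimage_mem_predual_predual {X : Set α} {Y : Set β} {G : Set (Set α)} {H : Set (Set β)}
    {R : Set (α × β)} (hR : ∀ x, (rimage R {x}).Finite) (hRY : rimage R univ ⊆ Y)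
    (hGH : ∀ s ∈ G, rimage R s ∈ H) {t : Set α} (ht : t ∈ predual X (predual X G)) :
    rimage R t ∈ predual Y (predual Y H) := by
  refine ⟨(rimage_mono (subset_univ t)).trans hRY, fun b hb => ?_⟩
  choose w hwt hwR using fun y : ↥(b ∩ rimage R t) => y.2.2
  have hw : range w ∈ predual X G := by
    refine ⟨(range_subset_iff.2 hwt).trans ht.1, fun s hs => ?_⟩
    have hfin : (Subtype.val ⁻¹' (b ∩ rimage R s) : Set ↥(b ∩ rimage R t)).Finite :=
      (inter_comm b _ ▸ hb.2 _ (hGH s hs)).preimage Subtype.val_injective.injOn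
    refine (hfin.image w).subset ?_
    rintro _ ⟨hs, y, rfl⟩
    exact ⟨y, ⟨y.2.1, w y, hs, hwR y⟩, rfl⟩
  have hwfin : (range w).Finite := by
    simpa [inter_eq_left.2 (range_subset_iff.2 hwt)] using ht.2 _ hw
  refine ((hwfin.biUnion fun x _ => hR x).subset fun y hy => ?_)
  exact mem_biUnion (mem_range_self (⟨y, inter_comm _ _ ▸ hy⟩ : ↥(b ∩ rimage R t)))
    (mem_rimage_singleton.2 (hwR _))

def cosupport (U v : Set α) : Set (Set α) := {d | d ⊆ U ∧ (d \ v).Finite}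

theorem predual_predual_cosupport (U v : Set α) :
    predual U (predual U (cosupport U v)) = cosupport U v := by
  refine Subset.antisymm (fun d hd => ⟨hd.1, ?_⟩) (fun d hd => ⟨hd.1, fun b hb => ?_⟩)
  · have hdv : d \ v ∈ predual U (cosupport U v) :=
      ⟨sdiff_subset.trans hd.1, fun a ha => ha.2.subset fun x hx => ⟨hx.1, hx.2.2⟩⟩
    exact (hd.2 _ hdv).subset fun x hx => ⟨hx, hx.1⟩
  · have hUv : (U ∩ v ∩ b).Finite :=
      hb.2 _ ⟨inter_subset_left, finite_empty.subset fun x hx => hx.2 hx.1.2⟩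
    refine (hd.2.union hUv).subset fun x ⟨hxb, hxd⟩ => ?_
    by_cases hxv : x ∈ v
    · exact Or.inr ⟨⟨hd.1 hxd, hxv⟩, hxb⟩
    · exact Or.inl ⟨hxd, hxv⟩

def FinSpace.ofCosupport (U v : Set α) : FinSpace α :=
  ⟨U, cosupport U v, predual_predual_cosupport U v⟩

open Classical in
noncomputable def collapse (v : Set α) (q : α) : α → α := fun γ => if γ ∈ v then γ else q

theorem finitaryRel_graphOn_collapse (U v : Set α) (q : α) :
    FinitaryRel U (cosupport U v) (insert q v) (cosupport (insert q v) v)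
      (graphOn (collapse v q) U) := by
  have hv : ∀ γ ∈ v, collapse v q γ = γ := fun γ hγ => if_pos hγ
  have hq : ∀ γ ∉ v, collapse v q γ = q := fun γ hγ => if_neg hγ
  simp only [FinitaryRel, rimage_graphOn, rimage_rrev_graphOn]
  refine ⟨fun d hd => ⟨?_, ?_⟩, fun b hb => ⟨inter_subset_left, fun d hd => ?_⟩⟩
  · rintro _ ⟨γ, -, rfl⟩
    by_cases hγ : γ ∈ v
    exacts [(hv γ hγ).symm ▸ Or.inr hγ, (hq γ hγ).symm ▸ Or.inl rfl]
  · refine (finite_singleton q).subset ?_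
    rintro _ ⟨⟨γ, -, rfl⟩, hγv⟩
    by_cases hγ : γ ∈ v
    exacts [(hγv ((hv γ hγ).symm ▸ hγ)).elim, hq γ hγ]
  · have hvb : (v ∩ b).Finite := hb.2 v ⟨subset_insert q v, by simp⟩
    refine (hd.2.union hvb).subset ?_
    rintro γ ⟨hγd, -, hγb⟩
    by_cases hγv : γ ∈ v
    · exact Or.inr ⟨hγv, hv γ hγv ▸ hγb⟩
    · exact Or.inl ⟨hγd, hγv⟩

end Finiteness

section Shrink

variable {α : Type*}

theorem exists_injective_shifts {N : Set α} (hN : N.Infinite) :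
    ∃ φ : ℕ → α → α, (∀ t, Injective (φ t)) ∧ (∀ t, MapsTo (φ t) N N) ∧
      (∀ t, EqOn (φ t) id Nᶜ) ∧ Pairwise fun t t' => Disjoint (φ t '' N) (φ t' '' N) := by
  have : Infinite N := hN.to_subtype
  obtain ⟨e⟩ : Nonempty (N × ℕ ≃ N) :=
    Cardinal.eq.1 (by simp [Cardinal.mul_aleph0_eq (Cardinal.aleph0_le_mk N)])
  classical
  let φ : ℕ → α → α := fun t γ => if h : γ ∈ N then (e (⟨γ, h⟩, t) : α) else γ
  have hφN : ∀ t γ (h : γ ∈ N), φ t γ = e (⟨γ, h⟩, t) := fun t γ h => dif_pos h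
  have hφNc : ∀ t γ, γ ∉ N → φ t γ = γ := fun t γ h => dif_neg h
  refine ⟨φ, fun t γ γ' he => ?_, fun t γ h => hφN t γ h ▸ (e _).2, fun t γ h => hφNc t γ h,
    fun t t' htt' => disjoint_left.2 ?_⟩
  · by_cases hγ : γ ∈ N <;> by_cases hγ' : γ' ∈ N
    · rw [hφN t γ hγ, hφN t γ' hγ'] at he
      exact congrArg (fun p : N × ℕ => (p.1 : α)) (e.injective (Subtype.ext he))
    · rw [hφN t γ hγ, hφNc t γ' hγ'] at he
      exact (hγ' (he ▸ (e _).2)).elim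
    · rw [hφNc t γ hγ, hφN t γ' hγ'] at he
      exact (hγ (he.symm ▸ (e _).2)).elim
    · rwa [hφNc t γ hγ, hφNc t γ' hγ'] at he
  · rintro _ ⟨γ, hγ, rfl⟩ ⟨γ', hγ', he⟩
    rw [hφN t γ hγ, hφN t' γ' hγ'] at he
    exact htt' (congrArg Prod.snd (e.injective (Subtype.ext he))).symm

open Classical in
def shrink (U v : Set α) : Set α := if (U \ v).Infinite then v else U

theorem subset_shrink {U v : Set α} (hvU : v ⊆ U) : v ⊆ shrink U v := by
  unfold shrink
  split_ifs
  exacts [subset_rfl, hvU]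

theorem shrink_subset {U v : Set α} (hvU : v ⊆ U) : shrink U v ⊆ U := by
  unfold shrink
  split_ifs
  exacts [hvU, subset_rfl]

theorem exists_shifts (U v : Set α) : ∃ φ : ℕ → α → α,
    (∀ t, Injective (φ t)) ∧ (∀ t, MapsTo (φ t) (U \ v) (U \ v)) ∧
    (∀ t, EqOn (φ t) id (shrink U v)) ∧
    Pairwise fun t t' => φ t '' U ∩ φ t' '' U ⊆ shrink U v := by
  unfold shrink
  split_ifs with hN
  · obtain ⟨φ, hinj, hmaps, hfix, hdisj⟩ := exists_injective_shifts hN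
    refine ⟨φ, hinj, hmaps, fun t γ hγ => hfix t fun h => h.2 hγ, fun t t' htt' => ?_⟩
    rintro _ ⟨⟨γ, hγ, rfl⟩, γ', hγ', he⟩
    by_cases hγN : γ ∈ U \ v
    · by_cases hγ'N : γ' ∈ U \ v
      · exact (disjoint_left.1 (hdisj htt') ⟨γ, hγN, rfl⟩ ⟨γ', hγ'N, he⟩).elim
      · rw [hfix t' hγ'N] at he
        exact (hγ'N (show id γ' ∈ U \ v from he ▸ hmaps t hγN)).elim
    · rw [hfix t hγN]
      exact not_not.1 fun h => hγN ⟨hγ, h⟩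
  · exact ⟨fun _ => id, fun _ => injective_id, fun _ => mapsTo_id _, fun _ => eqOn_refl _ _,
      fun _ _ _ => by simp⟩

theorem exists_fsLE_shrink_subset_web {J : Type*} {𝒜 : J → FinSpace α} (hdir : Directed fsLE 𝒜)
    {j₀ : J} {u : Set α} (hu : u ⊆ (𝒜 j₀).web) :
    ∃ j, fsLE (𝒜 j₀) (𝒜 j) ∧ shrink (⋃ j, (𝒜 j).web) u ⊆ (𝒜 j).web := by
  unfold shrink
  split_ifs with h
  · exact ⟨j₀, ⟨subset_rfl, subset_rfl⟩, hu⟩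
  have : Nonempty J := ⟨j₀⟩
  obtain ⟨j₁, hj₁⟩ := (hdir.mono_comp fsLE fun _ _ h => h.1)
    |>.exists_mem_subset_of_finset_subset_biUnion (s := (not_infinite.1 h).toFinset) (by simp)
  obtain ⟨j, h₀, h₁⟩ := hdir j₀ j₁
  refine ⟨j, h₀, fun γ hγ => ?_⟩
  by_cases hγu : γ ∈ u
  · exact h₀.1 (hu hγu)
  · exact h₁.1 (hj₁ (by simpa using And.intro hγ hγu))

end Shrink

/-- All webs live in the one type `α`, so relations between webs are subsets of `α × α`; the
values of the functor live in `β`. -/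
structure RelFunctor (I α β : Type*) where
  obj : (I → Set α) → Set β
  map : (I → Set (α × α)) → Set (β × β)
  map_subset : ∀ (A B : I → Set α) (f : I → Set (α × α)),
    (∀ i, f i ⊆ A i ×ˢ B i) → map f ⊆ obj A ×ˢ obj B
  map_id : ∀ A : I → Set α, map (fun i => rid (A i)) = rid (obj A)
  map_comp : ∀ f g : I → Set (α × α),
    map (fun i => rcomp (g i) (f i)) = rcomp (map g) (map f)

namespace RelFunctor

variable {I α β : Type*} (T : RelFunctor I α β)

def MapMonotone : Prop :=
  ∀ ⦃f g : I → Set (α × α)⦄, (∀ i, f i ⊆ g i) → T.map f ⊆ T.map g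

theorem mapMonotone_of_continuous
    (hcont : ∀ {J : I → Type w} (g : ∀ i, J i → Set (α × α)), (∀ i, Directed (· ⊆ ·) (g i)) →
      T.map (fun i => ⋃ j, g i j) = ⋃ j : ∀ i, J i, T.map fun i => g i (j i)) :
    T.MapMonotone := by
  intro f g hfg
  let pair : ∀ i, ULift.{w} Bool → Set (α × α) := fun i b => cond b.down (g i) (f i)
  have hdir : ∀ i, Directed (· ⊆ ·) (pair i) := fun i b c =>
    ⟨⟨true⟩, by cases b with | up b => cases b <;> simp [pair, hfg i],
      by cases c with | up c => cases c <;> simp [pair, hfg i]⟩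
  have hg : (fun i => ⋃ b, pair i b) = g := funext fun i =>
    (ULift.down_surjective.iUnion_comp fun b => cond b (g i) (f i)).trans
      (union_eq_iUnion.symm.trans (union_eq_left.2 (hfg i)))
  rw [← hg, hcont pair hdir]
  exact subset_iUnion_of_subset (fun _ => ⟨false⟩) subset_rfl

theorem obj_mono {A B : I → Set α} (h : ∀ i, A i ⊆ B i) : T.obj A ⊆ T.obj B := fun x hx =>
  (T.map_subset A B (fun i => rid (A i)) (fun i => rid_subset_prod subset_rfl (h i))
    (by rw [T.map_id]; exact show (x, x) ∈ rid (T.obj A) from ⟨hx, rfl⟩)).2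

theorem obj_inter (A B : I → Set α) : T.obj (fun i => A i ∩ B i) = T.obj A ∩ T.obj B := by
  refine subset_antisymm (subset_inter (T.obj_mono fun i => inter_subset_left)
    (T.obj_mono fun i => inter_subset_right)) fun x ⟨hxA, hxB⟩ => ?_
  have hxx : (x, x) ∈ T.map fun i => rcomp (rid (B i)) (rid (A i)) := by
    rw [T.map_comp, T.map_id, T.map_id]
    exact ⟨x, ⟨hxA, rfl⟩, hxB, rfl⟩
  simp only [rcomp_rid_rid, T.map_id] at hxx
  exact hxx.1

variable {T}

theorem exists_mem_map_of_rid_subset (hT : T.MapMonotone) {A : I → Set α} {r : I → Set (α × α)}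
    (htot : ∀ i, rid (A i) ⊆ rcomp (rrev (r i)) (r i)) {x : β} (hx : x ∈ T.obj A) :
    ∃ y, (x, y) ∈ T.map r ∧ (y, x) ∈ T.map fun i => rrev (r i) := by
  have h := hT htot
  rw [T.map_id, T.map_comp] at h
  exact h (show (x, x) ∈ rid (T.obj A) from ⟨hx, rfl⟩)

theorem eq_of_mem_map_rrev (hT : T.MapMonotone) {B : I → Set α} {r : I → Set (α × α)}
    (hfun : ∀ i, rcomp (r i) (rrev (r i)) ⊆ rid (B i)) {x y y' : β}
    (h : (y, x) ∈ T.map fun i => rrev (r i)) (h' : (x, y') ∈ T.map r) : y = y' := by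
  have hc := hT hfun
  rw [T.map_comp, T.map_id] at hc
  exact (hc (show (y, y') ∈ rcomp _ _ from ⟨x, h, h'⟩)).2

theorem map_functional (hT : T.MapMonotone) {A B : I → Set α} {r : I → Set (α × α)}
    (hr : ∀ i, r i ⊆ A i ×ˢ B i) (htot : ∀ i, rid (A i) ⊆ rcomp (rrev (r i)) (r i))
    (hfun : ∀ i, rcomp (r i) (rrev (r i)) ⊆ rid (B i)) {x y y' : β}
    (h : (x, y) ∈ T.map r) (h' : (x, y') ∈ T.map r) : y = y' := by
  obtain ⟨z, -, hz⟩ := exists_mem_map_of_rid_subset hT htot (T.map_subset A B r hr h).1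
  exact (eq_of_mem_map_rrev hT hfun hz h).symm.trans (eq_of_mem_map_rrev hT hfun hz h')

theorem mem_map_rrev (hT : T.MapMonotone) {A B : I → Set α} {r : I → Set (α × α)}
    (hr : ∀ i, r i ⊆ A i ×ˢ B i) (htot : ∀ i, rid (A i) ⊆ rcomp (rrev (r i)) (r i))
    (hfun : ∀ i, rcomp (r i) (rrev (r i)) ⊆ rid (B i)) {x y : β}
    (h : (x, y) ∈ T.map r) : (y, x) ∈ T.map fun i => rrev (r i) := by
  obtain ⟨z, -, hz⟩ := exists_mem_map_of_rid_subset hT htot (T.map_subset A B r hr h).1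
  rwa [eq_of_mem_map_rrev hT hfun hz h] at hz

theorem exists_mem_map_graphOn (hT : T.MapMonotone) {A : I → Set α} (f : I → α → α) {x : β}
    (hx : x ∈ T.obj A) : ∃ y, (x, y) ∈ T.map fun i => graphOn (f i) (A i) :=
  (exists_mem_map_of_rid_subset hT (fun _ => rid_subset_rcomp_rrev_graphOn) hx).imp
    fun _ h => h.1

theorem map_graphOn_functional (hT : T.MapMonotone) {A : I → Set α} {f : I → α → α}
    {x y y' : β} (h : (x, y) ∈ T.map fun i => graphOn (f i) (A i))
    (h' : (x, y') ∈ T.map fun i => graphOn (f i) (A i)) : y = y' :=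
  map_functional hT (fun i => graphOn_subset_prod (mapsTo_image (f i) (A i)))
    (fun _ => rid_subset_rcomp_rrev_graphOn) (fun _ => rcomp_graphOn_rrev_subset) h h'

theorem map_graphOn_injective (hT : T.MapMonotone) {A : I → Set α} {f : I → α → α}
    (hf : ∀ i, InjOn (f i) (A i)) {x x' y : β} (h : (x, y) ∈ T.map fun i => graphOn (f i) (A i))
    (h' : (x', y) ∈ T.map fun i => graphOn (f i) (A i)) : x = x' := by
  have hrev {a b : β} (hab : (a, b) ∈ T.map fun i => graphOn (f i) (A i)) :=
    mem_map_rrev hT (fun i => graphOn_subset_prod (mapsTo_image (f i) (A i)))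
      (fun _ => rid_subset_rcomp_rrev_graphOn) (fun _ => rcomp_graphOn_rrev_subset) hab
  exact map_functional hT (fun _ => rrev_graphOn_subset_prod)
    (fun _ => rid_image_subset_rcomp_graphOn_rrev) (fun i => rcomp_rrev_graphOn_subset (hf i))
    (hrev h) (hrev h')

theorem mem_map_graphOn_of_eqOn_comp (hT : T.MapMonotone) {A B : I → Set α} {f f' g : I → α → α}
    (hf : ∀ i, MapsTo (f i) (A i) (B i)) (hf' : ∀ i, MapsTo (f' i) (A i) (B i))
    (hg : ∀ i, EqOn (g i ∘ f i) (g i ∘ f' i) (A i)) {x y y' w : β}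
    (hy : (x, y) ∈ T.map fun i => graphOn (f i) (A i))
    (hw : (y, w) ∈ T.map fun i => graphOn (g i) (B i))
    (hy' : (x, y') ∈ T.map fun i => graphOn (f' i) (A i)) :
    (y', w) ∈ T.map fun i => graphOn (g i) (B i) := by
  have hcomp : ∀ f : I → α → α, (∀ i, MapsTo (f i) (A i) (B i)) →
      rcomp (T.map fun i => graphOn (g i) (B i)) (T.map fun i => graphOn (f i) (A i)) =
        T.map fun i => graphOn (g i ∘ f i) (A i) := fun f hf => by
    rw [← T.map_comp]
    simp only [rcomp_graphOn (hf _)]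
  have hxw : (x, w) ∈ T.map fun i => graphOn (g i ∘ f' i) (A i) := by
    simp only [← graphOn_congr (hg _), ← hcomp f hf]
    exact ⟨y, hy, hw⟩
  rw [← hcomp f' hf'] at hxw
  obtain ⟨m, hm, hmw⟩ := hxw
  rwa [map_graphOn_functional hT hy' hm]

theorem mem_obj_of_mem_map_graphOn_of_image_inter_subset (hT : T.MapMonotone)
    {A D : I → Set α} {f g : I → α → α} (hf : ∀ i, InjOn (f i) (A i))
    (hfD : ∀ i, EqOn (f i) id (D i)) (hDA : ∀ i, D i ⊆ A i)
    (hfg : ∀ i, f i '' A i ∩ g i '' A i ⊆ D i) {x y : β}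
    (hxf : (x, y) ∈ T.map fun i => graphOn (f i) (A i))
    (hxg : (x, y) ∈ T.map fun i => graphOn (g i) (A i)) : x ∈ T.obj D := by
  have hyf := (T.map_subset A _ _ (fun i => graphOn_subset_prod (mapsTo_image (f i) _)) hxf).2
  have hyg := (T.map_subset A _ _ (fun i => graphOn_subset_prod (mapsTo_image (g i) _)) hxg).2
  have hyD : y ∈ T.obj D := T.obj_mono hfg (T.obj_inter _ _ ▸ ⟨hyf, hyg⟩)
  have hyy : (y, y) ∈ T.map fun i => graphOn (f i) (A i) := by
    refine hT (fun i => ?_) (show (y, y) ∈ T.map fun i => rid (D i) by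
      rw [T.map_id]; exact show (y, y) ∈ rid (T.obj D) from ⟨hyD, rfl⟩)
    exact (graphOn_congr (hfD i)).symm.subset.trans (graphOn_mono (hDA i))
  rwa [map_graphOn_injective hT hf hxf hyy]

structure Ownership (T : RelFunctor I α β) where
  own : I → (I → Set α) → Set (β × α)
  own_subset : ∀ i (A : I → Set α), own i A ⊆ T.obj A ×ˢ A i
  finite_rimage_singleton : ∀ i (A : I → Set α) (x : β), (rimage (own i A) {x}).Finite
  lax : ∀ i (A B : I → Set α) (g : I → Set (α × α)),
    (∀ j, g j ⊆ A j ×ˢ B j) → rcomp (own i B) (T.map g) ⊆ rcomp (g i) (own i A)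

namespace Ownership

variable {T : RelFunctor I α β} (o : T.Ownership)

/-- The finiteness structure of `T^own` at webs `W` carrying structures `F`. -/
def transportFin (W : I → Set α) (F : I → Set (Set α)) : Set (Set β) :=
  {s | s ⊆ T.obj W ∧ ∀ i, rimage (o.own i W) s ∈ F i}

def IsTransport : Prop :=
  ∀ (𝒜 ℬ : I → FinSpace α) (f : I → Set (α × α)), (∀ i, f i ⊆ (𝒜 i).web ×ˢ (ℬ i).web) →
    (∀ i, FinitaryRel (𝒜 i).web (𝒜 i).fin (ℬ i).web (ℬ i).fin (f i)) →
    FinitaryRel (T.obj fun i => (𝒜 i).web) (o.transportFin (fun i => (𝒜 i).web) fun i => (𝒜 i).fin)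
      (T.obj fun i => (ℬ i).web) (o.transportFin (fun i => (ℬ i).web) fun i => (ℬ i).fin) (T.map f)

theorem rimage_own_subset (i : I) (A : I → Set α) (s : Set β) : rimage (o.own i A) s ⊆ A i :=
  fun _ ⟨_, _, h⟩ => (o.own_subset i A h).2

theorem mem_own_of_rid_subset {A B C : I → Set α} (h : ∀ j, rid (A j) ⊆ B j ×ˢ C j) {i : I}
    {x : β} {γ : α} (hx : x ∈ T.obj A) (hxγ : (x, γ) ∈ o.own i C) : (x, γ) ∈ o.own i B := by
  have hlax := o.lax i B C _ h
  rw [T.map_id] at hlax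
  obtain ⟨δ, hxδ, hδγ⟩ := hlax (show (x, γ) ∈ rcomp _ (rid (T.obj A)) from ⟨x, ⟨hx, rfl⟩, hxγ⟩)
  have hδ : δ = γ := (mem_rid.1 hδγ).2
  exact hδ ▸ hxδ

theorem rimage_own_of_subset {A B : I → Set α} (hAB : ∀ i, A i ⊆ B i) {s : Set β}
    (hs : s ⊆ T.obj A) (i : I) : rimage (o.own i B) s = rimage (o.own i A) s := by
  ext γ
  exact ⟨fun ⟨x, hx, h⟩ => ⟨x, hx, o.mem_own_of_rid_subset
      (fun j => rid_subset_prod subset_rfl (hAB j)) (hs hx) h⟩,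
    fun ⟨x, hx, h⟩ => ⟨x, hx, o.mem_own_of_rid_subset
      (fun j => rid_subset_prod (hAB j) subset_rfl) (hs hx) h⟩⟩

theorem rimage_own_subset_of_mem_map_graphOn {A B : I → Set α} {f : I → α → α}
    (hf : ∀ j, MapsTo (f j) (A j) (B j)) {i : I} {v : Set α} (hfix : EqOn (f i) id v) {x y : β}
    (hx : rimage (o.own i A) {x} ⊆ v) (hxy : (x, y) ∈ T.map fun j => graphOn (f j) (A j)) :
    rimage (o.own i B) {y} ⊆ v := by
  intro γ hγ
  obtain ⟨δ, hxδ, hδγ⟩ := o.lax i A B _ (fun j => graphOn_subset_prod (hf j))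
    (show (x, γ) ∈ rcomp _ _ from ⟨y, hxy, mem_rimage_singleton.1 hγ⟩)
  have hδv : δ ∈ v := hx (mem_rimage_singleton.2 hxδ)
  have hfδ : f i δ = γ := (mem_graphOn.1 hδγ).2
  rw [← hfδ, hfix hδv]
  exact hδv

theorem predual_predual_transportFin {W : I → Set α} {F : I → Set (Set α)}
    (hF : ∀ i, predual (W i) (predual (W i) (F i)) = F i) :
    predual (T.obj W) (predual (T.obj W) (o.transportFin W F)) = o.transportFin W F := by
  refine subset_antisymm (fun t ht => ⟨ht.1, fun i => ?_⟩)
    (subset_predual_predual fun s hs => hs.1)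
  rw [← hF i]
  exact rimage_mem_predual_predual (o.finite_rimage_singleton i W)
    (o.rimage_own_subset i W univ) (fun s hs => hs.2 i) ht

theorem iUnion_transportFin_subset {J : I → Type*} (𝒜 : ∀ i, J i → FinSpace α) :
    ⋃ j : ∀ i, J i, o.transportFin (fun i => (𝒜 i (j i)).web) (fun i => (𝒜 i (j i)).fin) ⊆
      o.transportFin (fun i => ⋃ j, (𝒜 i j).web) fun i => ⋃ j, (𝒜 i j).fin := by
  refine iUnion_subset fun j s ⟨hs, hown⟩ => ?_
  have hW : ∀ i, (𝒜 i (j i)).web ⊆ ⋃ j, (𝒜 i j).web := fun i => subset_iUnion_of_subset _ subset_rfl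
  refine ⟨hs.trans (T.obj_mono hW), fun i => ?_⟩
  rw [o.rimage_own_of_subset hW hs]
  exact mem_iUnion_of_mem _ (hown i)

/-- The collapse `c` of everything outside `v` to one point is finitary out of the cosupport
spaces, and `T c` sends all the `z t` to one point `Φ`. Owning only inside `v`, the `z t` form a
set of the transported cosupport structure, which meets the fibre of `T c` over `Φ` finitely. -/
theorem finite_range_of_mem_map_graphOn [Nonempty α] (hT : T.MapMonotone)
    (htrans : o.IsTransport) {U v : I → Set α} {φ : ℕ → I → α → α}
    (hfix : ∀ t i, EqOn (φ t i) id (v i)) (hmaps : ∀ t i, MapsTo (φ t i) (U i \ v i) (U i \ v i))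
    {x : β} (hown : ∀ i, rimage (o.own i U) {x} ⊆ v i) {z : ℕ → β}
    (hz : ∀ t, (x, z t) ∈ T.map fun i => graphOn (φ t i) (U i)) : (range z).Finite := by
  obtain ⟨q⟩ := ‹Nonempty α›
  have hφU : ∀ t i, MapsTo (φ t i) (U i) (U i) := fun t i γ hγ => by
    by_cases hγv : γ ∈ v i
    · rw [hfix t i hγv]
      exact hγ
    · exact (hmaps t i ⟨hγ, hγv⟩).1
  have hc : ∀ t i, EqOn (collapse (v i) q ∘ φ t i) (collapse (v i) q) (U i) := fun t i γ hγ => by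
    by_cases hγv : γ ∈ v i
    · simp only [comp_apply, hfix t i hγv, id]
    · simp only [comp_apply, collapse, if_neg hγv, if_neg (hmaps t i ⟨hγ, hγv⟩).2]
  let c : I → Set (α × α) := fun i => graphOn (collapse (v i) q) (U i)
  have hc_sub : ∀ i, c i ⊆ U i ×ˢ insert q (v i) := fun i => graphOn_subset_prod fun γ _ => by
    unfold collapse
    split_ifs with h
    exacts [Or.inr h, Or.inl rfl]
  obtain ⟨Φ, hΦ⟩ := exists_mem_map_graphOn hT (fun i => collapse (v i) q)
    (T.map_subset U U _ (fun i => graphOn_subset_prod (hφU 0 i)) (hz 0)).2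
  have hzΦ : ∀ t, (z t, Φ) ∈ T.map c := fun t => mem_map_graphOn_of_eqOn_comp hT (hφU 0) (hφU t)
    (fun i => (hc 0 i).trans (hc t i).symm) (hz 0) hΦ (hz t)
  have hfiber := (htrans (fun i => .ofCosupport (U i) (v i))
    (fun i => .ofCosupport (insert q (v i)) (v i)) c hc_sub
    (fun i => finitaryRel_graphOn_collapse _ _ _)).2 {Φ}
    (finite_mem_predual (singleton_subset_iff.2 (T.map_subset _ _ c hc_sub (hzΦ 0)).2)
      (finite_singleton Φ))
  have hz_own : ∀ i, rimage (o.own i U) (range z) ⊆ v i := by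
    rintro i γ ⟨_, ⟨t, rfl⟩, hγ⟩
    exact o.rimage_own_subset_of_mem_map_graphOn (hφU t) (hfix t i) (hown i) (hz t)
      (mem_rimage_singleton.2 hγ)
  have hzX : range z ∈ o.transportFin U fun i => cosupport (U i) (v i) := by
    refine ⟨range_subset_iff.2 fun t =>
      (T.map_subset _ _ _ (fun i => graphOn_subset_prod (hφU t i)) (hz t)).2, fun i => ⟨?_, ?_⟩⟩
    · exact o.rimage_own_subset i U _
    · rw [sdiff_eq_empty.2 (hz_own i)]
      exact finite_empty
  refine (hfiber.2 _ hzX).subset ?_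
  rintro _ ⟨t, rfl⟩
  exact ⟨⟨t, rfl⟩, Φ, rfl, hzΦ t⟩

/-- Two of the points `z t` coincide, and `T` of the shifts then forces `x` into the part fixed by
all shifts. That part is `v i` only where `U i \ v i` is infinite, since the shifts need infinitely
many disjoint copies of `U i \ v i` inside itself. -/
theorem mem_obj_of_rimage_own_subset (hT : T.MapMonotone) (htrans : o.IsTransport)
    {U v : I → Set α} (hvU : ∀ i, v i ⊆ U i) {x : β} (hx : x ∈ T.obj U)
    (hown : ∀ i, rimage (o.own i U) {x} ⊆ v i) :
    x ∈ T.obj fun i => shrink (U i) (v i) := by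
  rcases isEmpty_or_nonempty α with hα | hα
  · rwa [Subsingleton.elim (fun i => shrink (U i) (v i)) U]
  choose φ hinj hmaps hfix hinter using fun i => exists_shifts (U i) (v i)
  choose z hz using fun t => exists_mem_map_graphOn hT (fun i => φ i t) hx
  obtain ⟨t, t', hzt, htt'⟩ := not_injective_iff.1 fun hz_inj =>
    infinite_range_of_injective hz_inj <| o.finite_range_of_mem_map_graphOn hT htrans
      (φ := fun t i => φ i t) (fun t i => (hfix i t).mono (subset_shrink (hvU i)))
      (fun t i => hmaps i t) hown hz
  exact mem_obj_of_mem_map_graphOn_of_image_inter_subset hT (fun i => (hinj i t).injOn)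
    (fun i => hfix i t) (fun i => shrink_subset (hvU i)) (fun i => hinter i htt') (hz t)
    (hzt ▸ hz t')

theorem transportFin_iUnion_subset (hT : T.MapMonotone) (htrans : o.IsTransport)
    {J : I → Type*} (𝒜 : ∀ i, J i → FinSpace α) (hdir : ∀ i, Directed fsLE (𝒜 i)) :
    o.transportFin (fun i => ⋃ j, (𝒜 i j).web) (fun i => ⋃ j, (𝒜 i j).fin) ⊆
      ⋃ j : ∀ i, J i, o.transportFin (fun i => (𝒜 i (j i)).web) fun i => (𝒜 i (j i)).fin := by
  rintro s ⟨hs, hown⟩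
  choose j₀ hj₀ using fun i => mem_iUnion.1 (hown i)
  choose j hj₀j hj using fun i =>
    exists_fsLE_shrink_subset_web (hdir i) ((𝒜 i (j₀ i)).fin_subset_web (hj₀ i))
  have hsj : s ⊆ T.obj fun i => (𝒜 i (j i)).web := fun x hx =>
    T.obj_mono hj <| o.mem_obj_of_rimage_own_subset hT htrans
      (U := fun i => ⋃ j, (𝒜 i j).web) (fun i => o.rimage_own_subset i _ s)
      (hs hx) fun i => rimage_mono (singleton_subset_iff.2 hx)
  refine mem_iUnion.2 ⟨j, hsj, fun i => ?_⟩
  rw [← o.rimage_own_of_subset (B := fun i => ⋃ j, (𝒜 i j).web)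
    (fun i => subset_iUnion_of_subset _ subset_rfl) hsj]
  exact (hj₀j i).2 (hj₀ i)

end Ownership

end RelFunctor

/-- A transport functor is exactly continuous as soon as its underlying web
functor is continuous: given componentwise `⊑`-directed families of finiteness
spaces with exact suprema, the transport functor applied to the componentwise
suprema equals the supremum, over multi-indices, of its values, and this
supremum is exact. -/
theorem transport_functor_exactly_continuous
    {α β : Type*} {I : Type u} {J : I → Type v}
    (Tobj : (I → Set α) → Set β)
    (Tmap : (I → Set (α × α)) → Set (β × β))
    (hT_sub : ∀ (A B : I → Set α) (f : I → Set (α × α)),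
      (∀ i, f i ⊆ A i ×ˢ B i) → Tmap f ⊆ Tobj A ×ˢ Tobj B)
    (hT_id : ∀ A : I → Set α, Tmap (fun i => rid (A i)) = rid (Tobj A))
    (hT_comp : ∀ f g : I → Set (α × α),
      Tmap (fun i => rcomp (g i) (f i)) = rcomp (Tmap g) (Tmap f))
    -- continuity of the web functor: it commutes with componentwise directed
    -- unions of sets and of relations
    (hTobj_cont : ∀ {J' : I → Type v} (A : ∀ i, J' i → Set α),
      (∀ i, Directed (· ⊆ ·) (A i)) →
      Tobj (fun i => ⋃ j, A i j) = ⋃ j : ∀ i, J' i, Tobj fun i => A i (j i))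
    (hTmap_cont : ∀ {J' : I → Type v} (g : ∀ i, J' i → Set (α × α)),
      (∀ i, Directed (· ⊆ ·) (g i)) →
      Tmap (fun i => ⋃ j, g i j) = ⋃ j : ∀ i, J' i, Tmap fun i => g i (j i))
    (own : I → (I → Set α) → Set (β × α))
    (hown_sub : ∀ i (A : I → Set α), own i A ⊆ Tobj A ×ˢ A i)
    (hown_qf : ∀ i (A : I → Set α) (x : β), (rimage (own i A) {x}).Finite)
    (hown_lax : ∀ i (A B : I → Set α) (g : I → Set (α × α)),
      (∀ j, g j ⊆ A j ×ˢ B j) →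
      rcomp (own i B) (Tmap g) ⊆ rcomp (g i) (own i A))
    -- the ownership relation defines a transport functor
    (htrans : ∀ (𝒜 ℬ : I → FinSpace α) (f : I → Set (α × α)),
      (∀ i, f i ⊆ (𝒜 i).web ×ˢ (ℬ i).web) →
      (∀ i, FinitaryRel (𝒜 i).web (𝒜 i).fin (ℬ i).web (ℬ i).fin (f i)) →
      FinitaryRel (Tobj fun i => (𝒜 i).web)
        {s | s ⊆ (Tobj fun i => (𝒜 i).web) ∧
          ∀ i, rimage (own i fun j => (𝒜 j).web) s ∈ (𝒜 i).fin}
        (Tobj fun i => (ℬ i).web)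
        {s | s ⊆ (Tobj fun i => (ℬ i).web) ∧
          ∀ i, rimage (own i fun j => (ℬ j).web) s ∈ (ℬ i).fin}
        (Tmap f))
    -- componentwise directed families of finiteness spaces with exact suprema
    (𝒜 : ∀ i, J i → FinSpace α)
    (hdir : ∀ i, Directed fsLE (𝒜 i))
    (hexact : ∀ i, predual (⋃ j, (𝒜 i j).web)
        (predual (⋃ j, (𝒜 i j).web) (⋃ j, (𝒜 i j).fin)) = ⋃ j, (𝒜 i j).fin) :
    let W : (∀ i, J i) → I → Set α := fun j i => (𝒜 i (j i)).web
    let TF : (∀ i, J i) → Set (Set β) := fun j =>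
      {s | s ⊆ Tobj (W j) ∧ ∀ i, rimage (own i (W j)) s ∈ (𝒜 i (j i)).fin}
    let Wsup : I → Set α := fun i => ⋃ j, (𝒜 i j).web
    let Fsup : I → Set (Set α) := fun i =>
      predual (Wsup i) (predual (Wsup i) (⋃ j, (𝒜 i j).fin))
    let UW : Set β := ⋃ j : ∀ i, J i, Tobj (W j)
    -- the webs agree
    (Tobj Wsup = UW) ∧
    -- the finiteness structures agree
    ({s | s ⊆ Tobj Wsup ∧ ∀ i, rimage (own i Wsup) s ∈ Fsup i}
      = predual UW (predual UW (⋃ j : ∀ i, J i, TF j))) ∧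
    -- and the supremum is exact
    (predual UW (predual UW (⋃ j : ∀ i, J i, TF j)) = ⋃ j : ∀ i, J i, TF j) := by
  intro W TF Wsup Fsup UW
  let T : RelFunctor I α β := ⟨Tobj, Tmap, hT_sub, hT_id, hT_comp⟩
  let o : T.Ownership := ⟨own, hown_sub, hown_qf, hown_lax⟩
  have hT : T.MapMonotone := T.mapMonotone_of_continuous hTmap_cont
  have hweb : Tobj Wsup = UW := hTobj_cont _ fun i => (hdir i).mono_comp fsLE fun _ _ h => h.1
  have hFsup : Fsup = fun i => ⋃ j, (𝒜 i j).fin := funext hexact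
  have hunion := o.iUnion_transportFin_subset 𝒜
  have hcover := o.transportFin_iUnion_subset hT htrans 𝒜 hdir
  have hclosed := o.predual_predual_transportFin hexact
  have hdual : (⋃ j, TF j) ⊆ predual UW (predual UW (⋃ j, TF j)) :=
    subset_predual_predual fun s hs => hweb ▸ (hunion hs).1
  have hdual' : predual UW (predual UW (⋃ j, TF j)) ⊆
      o.transportFin Wsup fun i => ⋃ j, (𝒜 i j).fin := by
    rw [← hweb, ← hclosed]
    exact predual_predual_mono hunion
  refine ⟨hweb, ?_, (hdual'.trans hcover).antisymm hdual⟩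
  rw [hFsup]
  exact (hcover.trans hdual).antisymm hdual'

end FinitenessPaper
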